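/- arXiv:2101.11150 — 4 statements merged into one kernel-verified Lean document; each statement's English description precedes it below -/
import Mathlib

section
/- If additionally lim_{s→∞} (1/s)·ln(M_{s+1}/M_s) = 0 (sub-exponential growth), then the maximizer s(x) satisfies s(x)/ln x → ∞ as x → ∞. -/
open Filter

/-- If the log-convex positive sequence `M` has sub-exponential growth, i.e.
`(1/s) * log (M (s+1) / M s) → 0`, then the maximizer `s x` of
`t ↦ x ^ t / M t` satisfies `s x / log x → ∞` as `x → ∞`. -/
theorem maximizer_superlog (M : ℕ → ℝ) (hpos : ∀ t, 0 < M t)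
    (hconv : StrictMono (fun t : ℕ => M (t + 1) / M t))
    (hsub : Tendsto (fun t : ℕ => Real.log (M (t + 1) / M t) / (t : ℝ))
      atTop (nhds 0))
    (s : ℝ → ℕ)
    (hmax : ∀ x : ℝ, 1 ≤ x → ∀ t : ℕ, x ^ t / M t ≤ x ^ (s x) / M (s x)) :
    Tendsto (fun x : ℝ => (s x : ℝ) / Real.log x) atTop atTop := by
  have hratio : ∀ x : ℝ, 1 ≤ x → x ≤ M (s x + 1) / M (s x) := by
    intro x hx
    have h := hmax x hx (s x + 1)
    have hx0 : (0:ℝ) < x := lt_of_lt_of_le one_pos hx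
    have hpow : (0:ℝ) < x ^ (s x) := pow_pos hx0 _
    rw [pow_succ] at h
    have h' := (div_le_div_iff₀ (hpos _) (hpos _)).mp h
    rw [le_div_iff₀ (hpos _)]
    nlinarith [hpow, hpos (s x), hpos (s x + 1)]
  have hs_top : Tendsto (fun x : ℝ => s x) atTop atTop := by
    rw [tendsto_atTop]
    intro N
    filter_upwards [eventually_ge_atTop (max 1 (M (N+1)/M N + 1))] with x hx
    have hx1 : 1 ≤ x := le_trans (le_max_left _ _) hx
    have hr := hratio x hx1
    have hlt : M (N+1)/M N < M (s x + 1)/M (s x) := by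
      have := le_trans (le_max_right _ _) hx
      linarith
    exact (hconv.lt_iff_lt.mp hlt).le
  have hcomp : Tendsto (fun x : ℝ => Real.log (M (s x + 1)/M (s x)) / (s x : ℝ))
      atTop (nhds 0) := hsub.comp hs_top
  have hC : Tendsto (fun x : ℝ => Real.log x / (s x : ℝ)) atTop (nhds 0) := by
    apply tendsto_of_tendsto_of_tendsto_of_le_of_le' tendsto_const_nhds hcomp
    · filter_upwards [eventually_ge_atTop (1:ℝ)] with x hx
      exact div_nonneg (Real.log_nonneg hx) (Nat.cast_nonneg _)
    · filter_upwards [eventually_ge_atTop (1:ℝ),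
        hs_top.eventually (eventually_ge_atTop 1)] with x hx hs1
      have hspos : (0:ℝ) < (s x : ℝ) := by exact_mod_cast hs1
      have hlog : Real.log x ≤ Real.log (M (s x + 1)/M (s x)) :=
        Real.log_le_log (lt_of_lt_of_le one_pos hx) (hratio x hx)
      gcongr
  have hC' : Tendsto (fun x : ℝ => Real.log x / (s x : ℝ)) atTop (nhdsWithin 0 (Set.Ioi 0)) := by
    refine tendsto_nhdsWithin_of_tendsto_nhds_of_eventually_within _ hC ?_
    filter_upwards [eventually_gt_atTop (1:ℝ),
      hs_top.eventually (eventually_ge_atTop 1)] with x hx hs1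
    have hspos : (0:ℝ) < (s x : ℝ) := by exact_mod_cast hs1
    exact div_pos (Real.log_pos hx) hspos
  have := hC'.inv_tendsto_nhdsGT_zero
  exact this.congr fun x => inv_div _ _
end

section
/- Let α be irrational with convergents p_n/q_n, let n ≥ 1, γ ∈ (0,1), τ > 1, and suppose q_{n+1} ≤ q_n^{2τ}. If ρ satisfies ‖kα ± 2ρ‖_ℤ ≥ γ·max(1,|k|)^{-τ} for all k ∈ ℤ, then for every integer k with |k| ≤ q_{n+1}^{1/2} and q_{n+1} ≥ (2/γ)^{2τ}, one has |e^{2πi(kα + 2ρ)} − 1| ≥ γ·q_{n+1}^{-τ²}. -/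
open scoped Real

/-- The distance of a real number to the nearest integer. -/
noncomputable def distToInt (x : ℝ) : ℝ := |x - round x|

lemma distToInt_le_abs_exp_sub_one (x : ℝ) :
    distToInt x ≤ ‖Complex.exp (2 * π * Complex.I * x) - 1‖ := by
  set t : ℝ := x - round x with ht
  have habs : |t| ≤ 1 / 2 := abs_sub_round x
  have hexp : Complex.exp (2 * π * Complex.I * x)
      = Complex.exp ((2 * π * t : ℝ) * Complex.I) := by
    have h : (2 * π * Complex.I * x : ℂ)
        = (2 * π * t : ℝ) * Complex.I + (round x : ℤ) * (2 * π * Complex.I) := by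
      push_cast [ht]; ring
    rw [h, Complex.exp_add, Complex.exp_int_mul_two_pi_mul_I, mul_one]
  rw [hexp]
  have hre : (Complex.exp ((2 * π * t : ℝ) * Complex.I) - 1).re
      = Real.cos (2 * π * t) - 1 := by
    rw [Complex.sub_re, Complex.exp_ofReal_mul_I_re, Complex.one_re]
  have him : (Complex.exp ((2 * π * t : ℝ) * Complex.I) - 1).im
      = Real.sin (2 * π * t) := by
    rw [Complex.sub_im, Complex.exp_ofReal_mul_I_im, Complex.one_im, sub_zero]
  have habs2 : ‖Complex.exp ((2 * π * t : ℝ) * Complex.I) - 1‖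
      = 2 * |Real.sin (π * t)| := by
    rw [Complex.norm_def, Complex.normSq_apply, hre, him]
    have hs := Real.sin_sq_eq_half_sub (π * t)
    have h2 : 2 * (π * t) = 2 * π * t := by ring
    rw [h2] at hs
    have hpyth := Real.sin_sq_add_cos_sq (2 * π * t)
    have hcalc : (Real.cos (2 * π * t) - 1) * (Real.cos (2 * π * t) - 1)
        + Real.sin (2 * π * t) * Real.sin (2 * π * t)
        = (2 * |Real.sin (π * t)|) ^ 2 := by
      rw [mul_pow, sq_abs]
      nlinarith [hs, hpyth]
    rw [hcalc, Real.sqrt_sq (by positivity)]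
  rw [habs2]
  have hjordan : 2 / π * |π * t| ≤ |Real.sin (π * t)| := by
    apply Real.mul_abs_le_abs_sin
    rw [abs_mul, abs_of_pos Real.pi_pos]
    calc π * |t| ≤ π * (1 / 2) := by nlinarith [Real.pi_pos]
      _ = π / 2 := by ring
  have hπ : (0:ℝ) < π := Real.pi_pos
  have h2t : 2 * |t| ≤ |Real.sin (π * t)| := by
    have : 2 / π * |π * t| = 2 * |t| := by
      rw [abs_mul, abs_of_pos hπ]
      field_simp
    linarith [hjordan, this ▸ hjordan]
  have : distToInt x = |t| := rfl
  rw [this]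
  nlinarith [abs_nonneg t, abs_nonneg (Real.sin (π * t))]

/-- Small-divisor estimate, case `q (n+1) ≤ q n ^ (2τ)`: if `ρ` satisfies the
Diophantine condition `‖kα ± 2ρ‖_ℤ ≥ γ ⟨k⟩^{-τ}`, then for every `k` with
`|k| ≤ q (n+1) ^ (1/2)` and `q (n+1) ≥ (2/γ) ^ (2τ)`,
`|e^{2πi(kα + 2ρ)} - 1| ≥ γ * q (n+1) ^ (-τ²)`. -/
theorem small_divisor_case_one (α : ℝ) (hα : Irrational α)
    (q : ℕ → ℝ) (hq : q = (GenContFract.of α).dens)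
    (n : ℕ) (hn : 1 ≤ n) (γ τ : ℝ) (hγ : 0 < γ) (hγ1 : γ < 1) (hτ : 1 < τ)
    (hqn : q (n + 1) ≤ (q n) ^ (2 * τ)) (ρ : ℝ)
    (hDC : ∀ k : ℤ, γ * (max 1 |(k : ℝ)|) ^ (-τ) ≤ distToInt (k * α + 2 * ρ) ∧
      γ * (max 1 |(k : ℝ)|) ^ (-τ) ≤ distToInt (k * α - 2 * ρ)) :
    ∀ k : ℤ, |(k : ℝ)| ≤ (q (n + 1)) ^ ((1 : ℝ) / 2) →
      (2 / γ) ^ (2 * τ) ≤ q (n + 1) →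
      γ * (q (n + 1)) ^ (-(τ ^ 2)) ≤
        ‖Complex.exp (2 * π * Complex.I * (k * α + 2 * ρ)) - 1‖ := by
  intro k hk hQbig
  set Q : ℝ := q (n + 1) with hQdef
  have h1γ : 1 < 2 / γ := by
    rw [lt_div_iff₀ hγ]; linarith
  have hQ1 : 1 < Q := by
    have : (1:ℝ) < (2 / γ) ^ (2 * τ) := by
      apply Real.one_lt_rpow_iff_of_pos (by linarith) |>.mpr
      left; exact ⟨h1γ, by linarith⟩
    linarith
  have hQ0 : 0 < Q := by linarith
  set M : ℝ := max 1 |(k : ℝ)| with hM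
  have hM1 : (1:ℝ) ≤ M := le_max_left _ _
  have hM0 : 0 < M := by linarith
  have hMle : M ≤ Q ^ ((1:ℝ)/2) := by
    apply max_le _ hk
    exact Real.one_le_rpow hQ1.le (by norm_num)
  -- M ^ τ ≤ Q ^ (τ^2)
  have hpow : M ^ τ ≤ Q ^ (τ ^ 2) := by
    calc M ^ τ ≤ (Q ^ ((1:ℝ)/2)) ^ τ :=
          Real.rpow_le_rpow hM0.le hMle (by linarith)
      _ = Q ^ ((1:ℝ)/2 * τ) := by rw [← Real.rpow_mul hQ0.le]
      _ ≤ Q ^ (τ ^ 2) := by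
          apply Real.rpow_le_rpow_of_exponent_le hQ1.le
          nlinarith
  have hneg : Q ^ (-(τ ^ 2)) ≤ M ^ (-τ) := by
    rw [Real.rpow_neg hQ0.le, Real.rpow_neg hM0.le]
    apply inv_anti₀
    · positivity
    · exact hpow
  calc γ * Q ^ (-(τ ^ 2)) ≤ γ * M ^ (-τ) := by
        apply mul_le_mul_of_nonneg_left hneg hγ.le
    _ ≤ distToInt (k * α + 2 * ρ) := (hDC k).1
    _ ≤ ‖Complex.exp (2 * π * Complex.I * ((k : ℂ) * α + 2 * ρ)) - 1‖ := by
        have h := distToInt_le_abs_exp_sub_one ((k : ℝ) * α + 2 * ρ)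
        have hcast : ((((k : ℝ) * α + 2 * ρ) : ℝ) : ℂ) = (k : ℂ) * α + 2 * ρ := by
          push_cast; ring
        rwa [hcast] at h
end

section
/- Let α be irrational with convergents p_n/q_n, γ ∈ (0,1), τ > 1, and suppose q_{n+1}' := q_{n+1} satisfies \overline{Q} > q_{n+1}^{2τ} where \overline{Q} denotes some denominator with ‖q_{n+1}α‖_ℤ ≤ 1/\overline{Q}. If ρ ∈ DC_α(γ,τ) and \overline{Q} ≥ (2/γ)^{2τ}, then for any k with |k| ≤ \overline{Q}^{1/2}, writing k = k̃ + m·q_{n+1} with |k̃| < q_{n+1}, one has |e^{2πi(kα+2ρ)} − 1| ≥ (γ/2)·q_{n+1}^{-τ}. -/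
open scoped Real

lemma distToInt_eq_norm (x : ℝ) : distToInt x = ‖(x : UnitAddCircle)‖ := by
  rw [UnitAddCircle.norm_eq]; rfl

lemma distToInt_nonneg (x : ℝ) : 0 ≤ distToInt x := abs_nonneg _

lemma distToInt_add_le (a b : ℝ) : distToInt (a + b) ≤ distToInt a + distToInt b := by
  simp only [distToInt_eq_norm]
  rw [show ((a + b : ℝ) : UnitAddCircle) = (a : ℝ) + (b : ℝ) from QuotientAddGroup.mk_add _ _ _]
  exact norm_add_le _ _

lemma distToInt_neg (a : ℝ) : distToInt (-a) = distToInt a := by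
  simp only [distToInt_eq_norm]
  rw [show ((-a : ℝ) : UnitAddCircle) = -(a : ℝ) from QuotientAddGroup.mk_neg _ _]
  exact norm_neg _

lemma distToInt_int_mul_le (m : ℤ) (x : ℝ) :
    distToInt ((m : ℝ) * x) ≤ |(m : ℝ)| * distToInt x := by
  simp only [distToInt_eq_norm]
  rw [show (((m : ℝ) * x : ℝ) : UnitAddCircle) = m • (x : UnitAddCircle) by
    rw [← QuotientAddGroup.mk_zsmul]; norm_num [zsmul_eq_mul]]
  obtain ⟨nn, rfl | rfl⟩ := m.eq_nat_or_neg
  · rw [natCast_zsmul]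
    simpa using norm_nsmul_le (n := nn) (a := (x : UnitAddCircle))
  · rw [neg_zsmul, norm_neg, natCast_zsmul]
    simpa using norm_nsmul_le (n := nn) (a := (x : UnitAddCircle))


lemma abs_exp_two_mul_I_sub_one (x : ℝ) :
    ‖Complex.exp (((2 * x : ℝ) : ℂ) * Complex.I) - 1‖ = 2 * |Real.sin x| := by
  rw [Complex.exp_mul_I]
  have h1 : Complex.cos ((2 * x : ℝ) : ℂ) + Complex.sin ((2 * x : ℝ) : ℂ) * Complex.I - 1
      = ((Real.cos (2 * x) - 1 : ℝ) : ℂ) + ((Real.sin (2 * x) : ℝ) : ℂ) * Complex.I := by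
    rw [← Complex.ofReal_cos, ← Complex.ofReal_sin]; push_cast; ring
  rw [h1, Complex.norm_def, Complex.normSq_add_mul_I]
  have hc := Real.cos_two_mul x
  have hs := Real.sin_two_mul x
  have hp := Real.sin_sq_add_cos_sq x
  have key : (Real.cos (2 * x) - 1) ^ 2 + Real.sin (2 * x) ^ 2 = (2 * |Real.sin x|) ^ 2 := by
    rw [hc, hs]
    nlinarith [sq_abs (Real.sin x)]
  rw [key, Real.sqrt_sq (by positivity)]

lemma two_distToInt_le_abs_sin (θ : ℝ) : 2 * distToInt θ ≤ |Real.sin (π * θ)| := by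
  have hd : distToInt θ = |θ - round θ| := rfl
  set d := θ - (round θ : ℝ) with hdef
  have hd2 : |d| ≤ 1 / 2 := abs_sub_round θ
  have h1 : |Real.sin (π * θ)| = |Real.sin (π * d)| := by
    have he : π * θ = π * d + (round θ : ℤ) * π := by push_cast [hdef]; ring
    rw [he, Real.sin_add_int_mul_pi, abs_mul]
    have : |((-1 : ℝ)) ^ round θ| = 1 := by
      rcases Int.even_or_odd (round θ) with h | h
      · rw [h.neg_one_zpow]; norm_num
      · rw [Odd.neg_one_zpow h]; norm_num
    rw [this, one_mul]
  have hsin_nonneg : ∀ y : ℝ, 0 ≤ y → y ≤ 1 / 2 → 0 ≤ Real.sin (π * y) := by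
    intro y h0 hy
    apply Real.sin_nonneg_of_nonneg_of_le_pi (by positivity)
    nlinarith [Real.pi_pos]
  have h2 : |Real.sin (π * d)| = Real.sin (π * |d|) := by
    rcases abs_cases d with ⟨h, h0⟩ | ⟨h, h0⟩
    · rw [h, abs_of_nonneg (hsin_nonneg d h0 (h ▸ hd2))]
    · have hnn := hsin_nonneg (-d) (by linarith) (by rw [← h]; exact hd2)
      rw [show π * -d = -(π * d) by ring, Real.sin_neg] at hnn
      rw [h, show π * -d = -(π * d) by ring, Real.sin_neg, abs_of_nonpos (by linarith)]
  rw [h1, h2, hd]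
  have hb := Real.mul_le_sin (x := π * |d|) (by positivity)
    (by nlinarith [Real.pi_pos, abs_nonneg d])
  have hπ := Real.pi_pos
  calc 2 * |d| = 2 / π * (π * |d|) := by field_simp
    _ ≤ Real.sin (π * |d|) := hb


lemma dens_eq_int {α : ℝ} (hα : Irrational α) (n : ℕ) :
    ∃ N : ℤ, 1 ≤ N ∧ (GenContFract.of α).dens n = (N : ℝ) := by
  have hnt : ∀ m, ¬(GenContFract.of α).TerminatedAt m := by
    intro m hm
    obtain ⟨r, hr⟩ := GenContFract.exists_rat_eq_of_terminates ⟨m, hm⟩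
    exact hα ⟨r, hr.symm⟩
  have hs : ∀ m, ∃ gp : GenContFract.Pair ℝ, (GenContFract.of α).s.get? m = some gp ∧
      gp.a = 1 ∧ ∃ z : ℤ, 1 ≤ z ∧ gp.b = (z : ℝ) := by
    intro m
    cases h : (GenContFract.of α).s.get? m with
    | none => exact absurd h (hnt m)
    | some gp =>
      obtain ⟨ha, z, hz⟩ := GenContFract.of_partNum_eq_one_and_exists_int_partDen_eq h
      have hb1 : (1 : ℝ) ≤ gp.b := GenContFract.of_one_le_get?_partDen
        (GenContFract.partDen_eq_s_b h)
      refine ⟨gp, rfl, ha, z, ?_, hz⟩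
      rw [hz] at hb1; exact_mod_cast hb1
  induction n using Nat.strong_induction_on with
  | _ n ih =>
    match n with
    | 0 => exact ⟨1, le_refl _, by simp⟩
    | 1 =>
      obtain ⟨gp, hget, -, z, hz1, hzb⟩ := hs 0
      exact ⟨z, hz1, by rw [GenContFract.first_den_eq hget, hzb]⟩
    | (n + 2) =>
      obtain ⟨gp, hget, ha, z, hz1, hzb⟩ := hs (n + 1)
      obtain ⟨N0, hN0, hd0⟩ := ih n (by omega)
      obtain ⟨N1, hN1, hd1⟩ := ih (n + 1) (by omega)
      have hrec := GenContFract.dens_recurrence hget hd0 hd1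
      refine ⟨z * N1 + N0, by nlinarith, ?_⟩
      rw [hrec, ha, hzb]; push_cast; ring

/-- Small-divisor estimate, case `Q̄ > q (n+1) ^ (2τ)`: if `ρ ∈ DC_α(γ,τ)`,
`Q̄ ≥ (2/γ)^(2τ)`, and `‖q (n+1) • α‖_ℤ ≤ 1 / Q̄`, then for every `k` with
`|k| ≤ Q̄ ^ (1/2)`, `|e^{2πi(kα + 2ρ)} - 1| ≥ (γ/2) * q (n+1) ^ (-τ)`. -/
theorem small_divisor_case_two (α : ℝ) (hα : Irrational α)
    (q : ℕ → ℝ) (hq : q = (GenContFract.of α).dens)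
    (n : ℕ) (γ τ : ℝ) (hγ : 0 < γ) (hγ1 : γ < 1) (hτ : 1 < τ)
    (Q : ℝ) (hQ : (q (n + 1)) ^ (2 * τ) < Q) (hQγ : (2 / γ) ^ (2 * τ) ≤ Q)
    (hQq : distToInt (q (n + 1) * α) ≤ 1 / Q) (ρ : ℝ)
    (hDC : ∀ k : ℤ, γ * (max 1 |(k : ℝ)|) ^ (-τ) ≤ distToInt (k * α + 2 * ρ) ∧
      γ * (max 1 |(k : ℝ)|) ^ (-τ) ≤ distToInt (k * α - 2 * ρ)) :
    ∀ k : ℤ, |(k : ℝ)| ≤ Q ^ ((1 : ℝ) / 2) →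
      (γ / 2) * (q (n + 1)) ^ (-τ) ≤
        ‖Complex.exp (2 * π * Complex.I * (k * α + 2 * ρ)) - 1‖ := by
  intro k hk
  obtain ⟨N, hN1, hqnN⟩ : ∃ N : ℤ, 1 ≤ N ∧ q (n + 1) = (N : ℝ) := by
    rw [hq]; exact dens_eq_int hα (n + 1)
  set qn : ℝ := q (n + 1) with hqn
  -- basic positivity
  have hτ0 : (0 : ℝ) < τ := by linarith
  have hτne : τ ≠ 0 := ne_of_gt hτ0
  have hγne : γ ≠ 0 := ne_of_gt hγ
  have hqn1 : (1 : ℝ) ≤ qn := by rw [hqnN]; exact_mod_cast hN1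
  have hqnpos : (0 : ℝ) < qn := by linarith
  have hγ2pos : (0 : ℝ) < 2 / γ := by positivity
  have hγ2one : (1 : ℝ) ≤ 2 / γ := by rw [le_div_iff₀ hγ]; linarith
  have hQ0 : (0 : ℝ) < Q := lt_of_lt_of_le (Real.rpow_pos_of_pos hγ2pos _) hQγ
  have hQ1 : (1 : ℝ) ≤ Q := by
    refine le_trans ?_ hQγ
    calc (1:ℝ) = (2/γ) ^ (0:ℝ) := (Real.rpow_zero _).symm
      _ ≤ (2/γ) ^ (2*τ) := Real.rpow_le_rpow_of_exponent_le hγ2one (by linarith)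
  set A : ℝ := Q ^ ((1:ℝ)/2) with hA
  have hA0 : (0 : ℝ) < A := Real.rpow_pos_of_pos hQ0 _
  set P : ℝ := qn ^ τ with hP
  have hP0 : (0 : ℝ) < P := Real.rpow_pos_of_pos hqnpos _
  have hTP : qn ^ (-τ) = 1 / P := by rw [hP, Real.rpow_neg hqnpos.le, one_div]
  -- rpow estimates
  have hqnτ_le_A : P ≤ A := by
    have h := Real.rpow_le_rpow (by positivity) hQ.le (by norm_num : (0:ℝ) ≤ 1/2)
    rwa [← Real.rpow_mul hqnpos.le, show 2*τ*((1:ℝ)/2) = τ by ring] at h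
  have h2γ_le : 2/γ ≤ Q ^ ((1:ℝ)/(2*τ)) := by
    have h := Real.rpow_le_rpow (by positivity) hQγ (by positivity : (0:ℝ) ≤ 1/(2*τ))
    rwa [← Real.rpow_mul hγ2pos.le, show 2*τ*((1:ℝ)/(2*τ)) = 1 by field_simp,
      Real.rpow_one] at h
  have hqτ1 : qn ^ (τ-1) ≤ Q ^ ((τ-1)/(2*τ)) := by
    have h := Real.rpow_le_rpow (by positivity) hQ.le
      (show (0:ℝ) ≤ (τ-1)/(2*τ) from div_nonneg (by linarith) (by linarith))
    rwa [← Real.rpow_mul hqnpos.le, show 2*τ*((τ-1)/(2*τ)) = τ-1 by field_simp] at h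
  have hsum : Q ^ ((1:ℝ)/(2*τ)) * Q ^ ((τ-1)/(2*τ)) = A := by
    rw [hA, ← Real.rpow_add hQ0]
    congr 1
    field_simp
    ring
  have hmain1 : (2/γ) * qn ^ (τ-1) ≤ A := by
    rw [← hsum]
    exact mul_le_mul h2γ_le hqτ1 (by positivity) (by positivity)
  have h2γ_le_A : 2/γ ≤ A := by
    refine h2γ_le.trans (Real.rpow_le_rpow_of_exponent_le hQ1 ?_)
    rw [div_le_div_iff₀ (by positivity) (by norm_num)]
    nlinarith
  have hA_sq : A * A = Q := by
    rw [hA, ← Real.rpow_add hQ0]; norm_num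
  have hQ_ge : (2/γ) * P ≤ Q := by
    calc (2/γ) * P ≤ A * A := mul_le_mul h2γ_le_A hqnτ_le_A hP0.le hA0.le
      _ = Q := hA_sq
  have hqnA : (2/γ) * P ≤ qn * A := by
    have hqq : qn * qn ^ (τ-1) = P := by
      have h' := (Real.rpow_add hqnpos 1 (τ-1)).symm
      rw [Real.rpow_one] at h'
      rw [h', show (1:ℝ)+(τ-1) = τ by ring]
    calc (2/γ) * P = qn * ((2/γ) * qn ^ (τ-1)) := by rw [← hqq]; ring
      _ ≤ qn * A := by
          have := mul_le_mul_of_nonneg_left hmain1 hqnpos.le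
          linarith
  -- decomposition k = ktil + m * N
  set m : ℤ := round ((k : ℝ) / qn) with hm
  set ktil : ℤ := k - m * N with hktil
  have hkt : ((ktil : ℤ) : ℝ) = (k : ℝ) - (m : ℝ) * qn := by
    rw [hktil]; push_cast; rw [hqnN]
  have hround : |(k : ℝ)/qn - (m : ℝ)| ≤ 1/2 := abs_sub_round _
  have hktabs : |((ktil : ℤ) : ℝ)| ≤ qn / 2 := by
    rw [hkt]
    have : (k : ℝ) - (m : ℝ) * qn = qn * ((k : ℝ)/qn - (m : ℝ)) := by
      field_simp
    rw [this, abs_mul, abs_of_pos hqnpos]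
    nlinarith
  have hmax : max 1 |((ktil : ℤ) : ℝ)| ≤ qn := max_le hqn1 (by linarith)
  have hmaxpos : (0:ℝ) < max 1 |((ktil : ℤ) : ℝ)| := lt_of_lt_of_le one_pos (le_max_left _ _)
  have hpow : qn ^ (-τ) ≤ (max 1 |((ktil : ℤ) : ℝ)|) ^ (-τ) :=
    Real.rpow_le_rpow_of_nonpos hmaxpos hmax (by linarith)
  have hlow : γ * qn ^ (-τ) ≤ distToInt (((ktil : ℤ) : ℝ) * α + 2 * ρ) := by
    refine le_trans ?_ (hDC ktil).1
    exact mul_le_mul_of_nonneg_left hpow hγ.le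
  -- error term
  have hm_abs : |(m : ℝ)| ≤ A / qn + 1/2 := by
    have h1 : |(m : ℝ)| - |(k : ℝ)/qn| ≤ |(m : ℝ) - (k : ℝ)/qn| := abs_sub_abs_le_abs_sub _ _
    rw [abs_sub_comm] at h1
    have h2 : |(k : ℝ)/qn| ≤ A / qn := by
      rw [abs_div, abs_of_pos hqnpos]
      gcongr
    linarith
  have herr : distToInt ((m : ℝ) * (qn * α)) ≤ (A / qn + 1/2) * (1/Q) := by
    calc distToInt ((m : ℝ) * (qn * α)) ≤ |(m : ℝ)| * distToInt (qn * α) :=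
          distToInt_int_mul_le m _
      _ ≤ (A / qn + 1/2) * (1/Q) := by
          apply mul_le_mul hm_abs hQq (distToInt_nonneg _) (by positivity)
  have hPne : P ≠ 0 := ne_of_gt hP0
  have hAne : A ≠ 0 := ne_of_gt hA0
  have hqnne : qn ≠ 0 := ne_of_gt hqnpos
  have hQne : Q ≠ 0 := ne_of_gt hQ0
  have herr2 : (A / qn + 1/2) * (1/Q) ≤ (3*γ/4) * qn ^ (-τ) := by
    have e1 : A/qn * (1/Q) = 1/(qn * A) := by
      rw [← hA_sq]; field_simp
    have h1 : A/qn * (1/Q) ≤ (γ/2) * qn ^ (-τ) := by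
      rw [e1, hTP]
      have hx := one_div_le_one_div_of_le (by positivity : (0:ℝ) < (2/γ) * P) hqnA
      calc 1/(qn * A) ≤ 1/((2/γ)*P) := hx
        _ = γ/2 * (1/P) := by field_simp
    have h2 : (1/2) * (1/Q) ≤ (γ/4) * qn ^ (-τ) := by
      rw [hTP]
      have hx := one_div_le_one_div_of_le (by positivity : (0:ℝ) < (2/γ) * P) hQ_ge
      calc (1/2) * (1/Q) ≤ (1/2) * (1/((2/γ)*P)) := by
            apply mul_le_mul_of_nonneg_left hx (by norm_num)
        _ = γ/4 * (1/P) := by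
              rw [show (2/γ)*P = (2*P)/γ by ring, one_div_div]; ring
    calc (A / qn + 1/2) * (1/Q) = A/qn * (1/Q) + (1/2) * (1/Q) := by ring
      _ ≤ (γ/2) * qn ^ (-τ) + (γ/4) * qn ^ (-τ) := add_le_add h1 h2
      _ = (3*γ/4) * qn ^ (-τ) := by ring
  -- triangle inequality
  have hsplit : ((ktil : ℤ) : ℝ) * α + 2 * ρ
      = ((k : ℝ) * α + 2 * ρ) + (-((m : ℝ) * (qn * α))) := by
    rw [hkt]; ring
  have htri : distToInt (((ktil : ℤ) : ℝ) * α + 2 * ρ)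
      ≤ distToInt ((k : ℝ) * α + 2 * ρ) + distToInt ((m : ℝ) * (qn * α)) := by
    rw [hsplit]
    refine le_trans (distToInt_add_le _ _) ?_
    rw [distToInt_neg]
  have hdθ : (γ/4) * qn ^ (-τ) ≤ distToInt ((k : ℝ) * α + 2 * ρ) := by
    have := le_trans herr herr2
    linarith
  -- final: relate to the complex exponential
  have harg : (2 * (π:ℂ) * Complex.I * ((k:ℂ) * (α:ℂ) + 2 * (ρ:ℂ)))
      = ((2 * (π * ((k:ℝ) * α + 2 * ρ)) : ℝ) : ℂ) * Complex.I := by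
    push_cast; ring
  rw [harg, abs_exp_two_mul_I_sub_one]
  have hs := two_distToInt_le_abs_sin ((k:ℝ) * α + 2 * ρ)
  have hTpos : (0:ℝ) < qn ^ (-τ) := Real.rpow_pos_of_pos hqnpos _
  have hgT : 0 < γ * qn ^ (-τ) := by positivity
  linarith [hs, hdθ]
end

section
/- Let α satisfy |α − a/q| < 1/q² with gcd(a,q)=1, and let I be any set of at most q/4 consecutive nonzero integers with absolute values at most q/2. Then, after excluding at most one element of I, the decreasing rearrangement (α_i) of {‖kα‖_ℤ^{-1} : k ∈ I} satisfies α_i ≤ 2q/i. -/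
lemma distToInt_le (x : ℝ) (m : ℤ) : distToInt x ≤ |x - m| := by
  unfold distToInt
  rcases eq_or_ne m (round x) with h | h
  · rw [h]
  · have h1 : (1 : ℝ) ≤ |(m : ℝ) - round x| := by
      have h3 : (1 : ℤ) ≤ |m - round x| := Int.one_le_abs (sub_ne_zero.mpr h)
      calc (1:ℝ) = ((1:ℤ):ℝ) := by norm_num
        _ ≤ ((|m - round x| : ℤ) : ℝ) := by exact_mod_cast h3
        _ = |(m:ℝ) - round x| := by push_cast [Int.cast_abs]; ring_nf
    have h2 := abs_sub_round x
    have h3 : |(m:ℝ) - round x| ≤ |(m:ℝ) - x| + |x - round x| := abs_sub_le _ _ _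
    have h4 : |x - (m:ℝ)| = |(m:ℝ) - x| := abs_sub_comm _ _
    linarith

lemma distToInt_lip (x y : ℝ) : distToInt x ≤ |x - y| + distToInt y := by
  calc distToInt x ≤ |x - round y| := distToInt_le x (round y)
    _ ≤ |x - y| + |y - round y| := abs_sub_le _ _ _
    _ = |x - y| + distToInt y := rfl

noncomputable def Raux (a : ℤ) (q : ℕ) (k : ℤ) : ℤ :=
  k * a - q * round (((k * a : ℤ) : ℝ) / q)

noncomputable def nraux (a : ℤ) (q : ℕ) (k : ℤ) : ℕ := (Raux a q k).natAbs

lemma hdvd3 (q : ℕ) (hq : 0 < q) (d : ℤ) (hdvd : (q:ℤ) ∣ d) (hle : |d| ≤ q) :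
    d = 0 ∨ d = q ∨ d = -q := by
  obtain ⟨c, hc⟩ := hdvd
  have hqZ : (0:ℤ) < q := by exact_mod_cast hq
  have habs : |d| = (q:ℤ) * |c| := by rw [hc, abs_mul, abs_of_pos hqZ]
  have hcabs : |c| ≤ 1 := by
    by_contra h
    push_neg at h
    nlinarith [abs_nonneg c]
  have h2 := abs_le.mp hcabs
  have : c = -1 ∨ c = 0 ∨ c = 1 := by omega
  rcases this with h | h | h <;> simp [hc, h]


/-- Let `|α - a/q| < 1/q²` with `a/q` in lowest terms, and let `I` be a set of
nonzero integers forming an interval (avoiding `0`), with at most `q/4`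
elements, all of absolute value at most `q/2`.  Then after excluding at most one
element `k₀` of `I`, the decreasing rearrangement `αᵢ` of
`{‖kα‖_ℤ⁻¹ : k ∈ I \ {k₀}}` satisfies `αᵢ ≤ 2q/i`; equivalently, for each
`i ≥ 1` fewer than `i` elements `k` of `I \ {k₀}` satisfy `‖kα‖_ℤ⁻¹ > 2q/i`. -/
theorem decreasing_rearrangement_bound (α : ℝ) (a : ℤ) (q : ℕ) (hq : 0 < q)
    (hgcd : Int.gcd a (q : ℤ) = 1) (happrox : |α - (a : ℝ) / q| < 1 / (q : ℝ) ^ 2)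
    (I : Finset ℤ) (h0 : (0 : ℤ) ∉ I)
    (hcard : (I.card : ℝ) ≤ (q : ℝ) / 4)
    (habs : ∀ k ∈ I, (|k| : ℝ) ≤ (q : ℝ) / 2)
    (hinterval : ∀ k₁ k₂ k₃ : ℤ, k₁ ∈ I → k₃ ∈ I → k₁ ≤ k₂ → k₂ ≤ k₃ →
      k₂ ≠ 0 → k₂ ∈ I) :
    ∃ k₀ : ℤ, ∀ i : ℕ, 1 ≤ i →
      (((I.erase k₀).filter
          fun k : ℤ => 2 * (q : ℝ) / i < (distToInt ((k : ℝ) * α))⁻¹).card : ℕ) < i := by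
  have hq0 : (0:ℝ) < q := by exact_mod_cast hq
  -- distToInt at rational points
  have hf : ∀ k : ℤ, distToInt (((k * a : ℤ) : ℝ) / q) = (nraux a q k : ℝ) / q := by
    intro k
    have h1 : ((k * a : ℤ):ℝ)/q - (round (((k*a : ℤ):ℝ)/q) : ℤ) = ((Raux a q k : ℤ) : ℝ)/q := by
      unfold Raux; push_cast; field_simp
    unfold distToInt
    rw [h1, abs_div, abs_of_pos hq0]
    congr 1
    unfold nraux
    push_cast [Nat.cast_natAbs]
    rfl
  -- 2|k| ≤ q on I, in convenient form
  have h2k : ∀ k ∈ I, -(q:ℤ) ≤ 2*k ∧ 2*k ≤ (q:ℤ) := by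
    intro k hk
    have h := habs k hk
    have h1 : ((2 * |k| : ℤ) : ℝ) ≤ (q:ℝ) := by push_cast; linarith
    have h2 : 2 * |k| ≤ (q:ℤ) := by exact_mod_cast h1
    rcases abs_cases k with ⟨he, _⟩ | ⟨he, _⟩ <;> omega
  have hco : IsCoprime ((q:ℤ)) a := by
    rw [Int.isCoprime_iff_gcd_eq_one, Int.gcd_comm]; exact hgcd
  -- nr ≥ 1 on I
  have hnr1 : ∀ k ∈ I, 1 ≤ nraux a q k := by
    intro k hk
    rcases Nat.eq_zero_or_pos (nraux a q k) with h | h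
    · exfalso
      have hR0 : Raux a q k = 0 := Int.natAbs_eq_zero.mp h
      unfold Raux at hR0
      have hdvd : (q:ℤ) ∣ k * a := ⟨round (((k * a : ℤ):ℝ) / q), by linarith⟩
      have hdk : (q:ℤ) ∣ k := hco.dvd_of_dvd_mul_right hdvd
      have hk0 : k ≠ 0 := fun hh => h0 (hh ▸ hk)
      have h1 : (q:ℤ) ≤ |k| := Int.le_of_dvd (abs_pos.mpr hk0) ((dvd_abs _ _).mpr hdk)
      have h2 := h2k k hk
      rcases abs_cases k with ⟨he, _⟩ | ⟨he, _⟩ <;> omega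
    · exact h
  -- claim A
  have hA : ∀ k ∈ I, ∀ k' ∈ I, nraux a q k = nraux a q k' → k = k' ∨ k = -k' := by
    intro k hk k' hk' hnn
    have heq : Raux a q k = Raux a q k' ∨ Raux a q k = -(Raux a q k') :=
      Int.natAbs_eq_natAbs_iff.mp hnn
    have hbk := h2k k hk
    have hbk' := h2k k' hk'
    rcases heq with h | h
    · have hdvd : (q:ℤ) ∣ (k - k') * a := by
        refine ⟨round (((k * a : ℤ):ℝ) / q) - round (((k' * a : ℤ):ℝ) / q), ?_⟩
        unfold Raux at h
        linear_combination h
      have hd : (q:ℤ) ∣ (k - k') := hco.dvd_of_dvd_mul_right hdvd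
      have habs' : |k - k'| ≤ (q:ℤ) := abs_le.mpr ⟨by omega, by omega⟩
      rcases hdvd3 q hq _ hd habs' with h1 | h1 | h1 <;> omega
    · have hdvd : (q:ℤ) ∣ (k + k') * a := by
        refine ⟨round (((k * a : ℤ):ℝ) / q) + round (((k' * a : ℤ):ℝ) / q), ?_⟩
        unfold Raux at h
        linear_combination h
      have hd : (q:ℤ) ∣ (k + k') := hco.dvd_of_dvd_mul_right hdvd
      have habs' : |k + k'| ≤ (q:ℤ) := abs_le.mpr ⟨by omega, by omega⟩
      rcases hdvd3 q hq _ hd habs' with h1 | h1 | h1 <;> omega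
  -- distance comparison
  have hd : ∀ k ∈ I, |distToInt ((k:ℝ) * α) - (nraux a q k : ℝ)/q| ≤ 1/(2*q) := by
    intro k hk
    have hdiff : |(k:ℝ) * α - ((k * a : ℤ):ℝ)/q| ≤ 1/(2*q) := by
      have h1 : (k:ℝ) * α - ((k * a : ℤ):ℝ)/q = (k:ℝ) * (α - (a:ℝ)/q) := by
        push_cast; field_simp
      rw [h1, abs_mul]
      have h2 : |(k:ℝ)| ≤ (q:ℝ)/2 := habs k hk
      have h3 : |α - (a:ℝ)/q| ≤ 1/(q:ℝ)^2 := le_of_lt happrox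
      calc |(k:ℝ)| * |α - (a:ℝ)/q| ≤ ((q:ℝ)/2) * (1/(q:ℝ)^2) := by
            apply mul_le_mul h2 h3 (abs_nonneg _) (by positivity)
        _ = 1/(2*q) := by field_simp
    have l1 := distToInt_lip ((k:ℝ) * α) (((k * a : ℤ):ℝ)/q)
    have l2 := distToInt_lip (((k * a : ℤ):ℝ)/q) ((k:ℝ) * α)
    rw [hf k] at l1 l2
    rw [abs_sub_comm ((((k * a : ℤ):ℝ))/q) ((k:ℝ) * α)] at l2
    rw [abs_le]
    constructor <;> linarith
  -- positivity
  have hdpos : ∀ k ∈ I, 1/(2*(q:ℝ)) ≤ distToInt ((k:ℝ) * α) := by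
    intro k hk
    have h1 := abs_le.mp (hd k hk)
    have h2 : (1:ℝ) ≤ (nraux a q k : ℝ) := by exact_mod_cast hnr1 k hk
    have h3 : (1:ℝ)/q ≤ (nraux a q k : ℝ)/q := by gcongr
    linarith [show (1:ℝ)/(2*q) = 1/(q:ℝ) - 1/(2*q) by field_simp; ring]
  -- key numeric bound
  have key : ∀ i : ℕ, 1 ≤ i → ∀ k ∈ I,
      2 * (q:ℝ)/i < (distToInt ((k:ℝ) * α))⁻¹ → 2 * nraux a q k ≤ i := by
    intro i hi k hk hcond
    have hi0 : (0:ℝ) < i := by exact_mod_cast hi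
    set d := distToInt ((k:ℝ) * α) with hdd
    have hd0 : 0 < d := lt_of_lt_of_le (by positivity) (hdpos k hk)
    have h1 : (2*(q:ℝ)/i) * d < 1 := by
      have := mul_lt_mul_of_pos_right hcond hd0
      rwa [inv_mul_cancel₀ (ne_of_gt hd0)] at this
    rw [div_mul_eq_mul_div, div_lt_one hi0] at h1
    have h5 : (nraux a q k : ℝ)/q ≤ d + 1/(2*q) := by linarith [(abs_le.mp (hd k hk)).1]
    have h6 : (nraux a q k : ℝ) ≤ q*d + 1/2 := by
      have h7 := mul_le_mul_of_nonneg_right h5 (le_of_lt hq0)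
      rw [div_mul_cancel₀ _ (ne_of_gt hq0)] at h7
      calc (nraux a q k : ℝ) ≤ (d + 1/(2*q))*q := h7
        _ = q*d + 1/2 := by field_simp
    have h8 : ((2 * nraux a q k : ℕ) : ℝ) < i + 1 := by push_cast; linarith
    have h9 : (2 * nraux a q k : ℕ) < i + 1 := by exact_mod_cast h8
    omega
  -- counting
  rcases I.eq_empty_or_nonempty with hIe | hIne
  · refine ⟨0, fun i hi => ?_⟩
    simp [hIe]
    omega
  · obtain ⟨k₀, hk₀I, hk₀min⟩ := I.exists_min_image (nraux a q) hIne
    refine ⟨k₀, fun i hi => ?_⟩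
    set S := (I.erase k₀).filter
        (fun k : ℤ => 2 * (q : ℝ) / i < (distToInt ((k : ℝ) * α))⁻¹) with hSdef
    show S.card < i
    have hSI : ∀ k ∈ S, k ∈ I := fun k hk => Finset.mem_of_mem_erase (Finset.mem_filter.mp hk).1
    have hSnr : ∀ k ∈ S, nraux a q k ∈ Finset.Icc 1 (i/2) := by
      intro k hk
      have h1 := key i hi k (hSI k hk) (Finset.mem_filter.mp hk).2
      have h2 := hnr1 k (hSI k hk)
      simp only [Finset.mem_Icc]
      omega
    have hS0 : ∀ k ∈ S, k ≠ 0 := fun k hk h => h0 (h ▸ hSI k hk)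
    set P := S.filter (fun k : ℤ => 0 < k) with hPdef
    set N := S.filter (fun k : ℤ => ¬ 0 < k) with hNdef
    have hPN : P.card + N.card = S.card := Finset.card_filter_add_card_filter_not _
    have hinjP : Set.InjOn (nraux a q) P := by
      intro k hk k' hk' h
      have hk1 := Finset.mem_filter.mp (Finset.mem_coe.mp hk)
      have hk1' := Finset.mem_filter.mp (Finset.mem_coe.mp hk')
      rcases hA k (hSI k hk1.1) k' (hSI k' hk1'.1) h with h1 | h1
      · exact h1
      · have := hk1.2; have := hk1'.2; omega
    have hinjN : Set.InjOn (nraux a q) N := by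
      intro k hk k' hk' h
      have hk1 := Finset.mem_filter.mp (Finset.mem_coe.mp hk)
      have hk1' := Finset.mem_filter.mp (Finset.mem_coe.mp hk')
      rcases hA k (hSI k hk1.1) k' (hSI k' hk1'.1) h with h1 | h1
      · exact h1
      · have := hk1.2
        have := hk1'.2
        have := hS0 k hk1.1
        have := hS0 k' hk1'.1
        omega
    have hPle : P.card ≤ i/2 := by
      have := Finset.card_le_card_of_injOn (nraux a q)
        (fun k hk => hSnr k (Finset.mem_filter.mp hk).1) hinjP
      simpa only [Nat.card_Icc, Nat.add_sub_cancel] using this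
    have hNle : N.card ≤ i/2 := by
      have := Finset.card_le_card_of_injOn (nraux a q)
        (fun k hk => hSnr k (Finset.mem_filter.mp hk).1) hinjN
      simpa only [Nat.card_Icc, Nat.add_sub_cancel] using this
    by_contra hcon
    push_neg at hcon
    have hPeq : P.card = i/2 ∧ N.card = i/2 ∧ 1 ≤ i/2 := by omega
    have hPim : P.image (nraux a q) = Finset.Icc 1 (i/2) := by
      apply Finset.eq_of_subset_of_card_le
      · intro x hx
        obtain ⟨k, hk, rfl⟩ := Finset.mem_image.mp hx
        exact hSnr k (Finset.mem_filter.mp hk).1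
      · rw [Finset.card_image_of_injOn hinjP, Nat.card_Icc]
        omega
    have hNim : N.image (nraux a q) = Finset.Icc 1 (i/2) := by
      apply Finset.eq_of_subset_of_card_le
      · intro x hx
        obtain ⟨k, hk, rfl⟩ := Finset.mem_image.mp hx
        exact hSnr k (Finset.mem_filter.mp hk).1
      · rw [Finset.card_image_of_injOn hinjN, Nat.card_Icc]
        omega
    have h1P : (1:ℕ) ∈ P.image (nraux a q) := by
      rw [hPim, Finset.mem_Icc]
      omega
    have h1N : (1:ℕ) ∈ N.image (nraux a q) := by
      rw [hNim, Finset.mem_Icc]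
      omega
    obtain ⟨p, hpP, hp1⟩ := Finset.mem_image.mp h1P
    obtain ⟨n, hnN, hn1⟩ := Finset.mem_image.mp h1N
    have hpS := (Finset.mem_filter.mp hpP).1
    have hnS := (Finset.mem_filter.mp hnN).1
    have hpI : p ∈ I := hSI p hpS
    have hnI : n ∈ I := hSI n hnS
    have hppos : 0 < p := (Finset.mem_filter.mp hpP).2
    have hnneg : n < 0 := by
      have h2 := (Finset.mem_filter.mp hnN).2
      have h3 := hS0 n hnS
      omega
    have hk01 : nraux a q k₀ = 1 := le_antisymm (hp1 ▸ hk₀min p hpI) (hnr1 k₀ hk₀I)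
    have hpne : p ≠ k₀ := Finset.ne_of_mem_erase (Finset.mem_filter.mp hpS).1
    have hnne : n ≠ k₀ := Finset.ne_of_mem_erase (Finset.mem_filter.mp hnS).1
    rcases hA p hpI k₀ hk₀I (by rw [hp1, hk01]) with h1 | h1
    · exact absurd h1 hpne
    rcases hA n hnI k₀ hk₀I (by rw [hn1, hk01]) with h2 | h2
    · exact absurd h2 hnne
    omega
end
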